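/- For a real function φ that is five times differentiable at t, define J[φ](t) = φ'(t)·(φ'(t)²·φ⁽⁵⁾(t) − 5·φ'(t)·φ''(t)·φ⁽⁴⁾(t) + 5·φ''(t)²·φ'''(t)) / (2·φ'(t)·φ'''(t) − 3·φ''(t)²)². Let A, B, a, b, c, d ∈ ℝ with B ≠ 0 and ad − bc = 1, let t₀ ∈ ℝ and set t₁ = A + B·t₀. Let ψ : ℝ → ℝ be five times continuously differentiable on an open neighborhood of t₁ with c·ψ + d nonvanishing on that neighborhood, and assume 2·ψ'(t₁)·ψ'''(t₁) − 3·ψ''(t₁)² ≠ 0. Define ψ₂(t) = sgn(B)·(a·ψ(A + B t) + b)/(c·ψ(A + B t) + d), where sgn(B) = B/|B|. Then J[ψ₂](t₀) = J[ψ](t₁). -/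

import Mathlib

/-!
`J` is a function of the 5-jet of `φ`, and it is homogeneous: replacing `φ` by `s φ + b` and
reparametrizing `t ↦ A + B t` multiplies the `k`-th derivative by `s Bᵏ`, hence multiplies the
numerator and the squared denominator of `J` by the same factor `(s² B⁴)²`. For the inversion
`φ ↦ φ⁻¹`, differentiating `φ · φ⁻¹ = 1` five times (Leibniz) expresses the jet of `φ⁻¹`
polynomially through that of `φ` and the value `φ⁻¹`; the numerator and the denominator of `J`
then pick up the factors `φ⁻⁸` and `φ⁻⁴`. A Möbius map `(a φ + b)/(c φ + d)` is an affine map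
of `φ` when `c = 0`, and otherwise `a/c - (ad - bc)/c · (c φ + d)⁻¹`, a composition of these
three moves.
-/

/-- The second generating differential invariant
`J[φ] = φ'·(φ'²φ⁽⁵⁾ - 5φ'φ''φ⁽⁴⁾ + 5φ''²φ''') / (2φ'φ''' - 3φ''²)²`. -/
noncomputable def invJ (φ : ℝ → ℝ) (t : ℝ) : ℝ :=
  deriv φ t * ((deriv φ t) ^ 2 * iteratedDeriv 5 φ t
      - 5 * deriv φ t * iteratedDeriv 2 φ t * iteratedDeriv 4 φ t
      + 5 * (iteratedDeriv 2 φ t) ^ 2 * iteratedDeriv 3 φ t) /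
    (2 * deriv φ t * iteratedDeriv 3 φ t - 3 * (iteratedDeriv 2 φ t) ^ 2) ^ 2

open Filter Topology Finset

noncomputable def jetJ (p : ℕ → ℝ) : ℝ :=
  p 1 * (p 1 ^ 2 * p 5 - 5 * p 1 * p 2 * p 4 + 5 * p 2 ^ 2 * p 3) /
    (2 * p 1 * p 3 - 3 * p 2 ^ 2) ^ 2

theorem invJ_eq_jetJ (φ : ℝ → ℝ) (t : ℝ) : invJ φ t = jetJ (fun n => iteratedDeriv n φ t) := by
  simp only [invJ, jetJ, iteratedDeriv_one]

theorem div_sq_eq_of_scaling {K : Type*} [Field K] {N D N' D' μ : K} (hμ : μ ≠ 0)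
    (hN : N' = μ ^ 2 * N) (hD : D' = μ * D) : N' / D' ^ 2 = N / D ^ 2 := by
  rw [hN, hD, mul_pow, mul_div_mul_left _ _ (pow_ne_zero 2 hμ)]

theorem jetJ_eq_of_rescale {p q : ℕ → ℝ} {s B : ℝ} (hs : s ≠ 0) (hB : B ≠ 0)
    (hq : ∀ n, 1 ≤ n → q n = s * B ^ n * p n) : jetJ q = jetJ p := by
  unfold jetJ
  rw [hq 1 le_rfl, hq 2 (by norm_num), hq 3 (by norm_num), hq 4 (by norm_num),
    hq 5 (by norm_num)]
  exact div_sq_eq_of_scaling (μ := s ^ 2 * B ^ 4) (by positivity) (by ring) (by ring)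

theorem jetJ_eq_of_mul_eq_one {p q : ℕ → ℝ} (h₀ : p 0 * q 0 = 1)
    (h : ∀ n, 0 < n → n ≤ 5 → ∑ i ∈ range (n + 1), (n.choose i : ℝ) * p i * q (n - i) = 0) :
    jetJ q = jetJ p := by
  have e₁ := h 1 (by norm_num) (by norm_num)
  have e₂ := h 2 (by norm_num) (by norm_num)
  have e₃ := h 3 (by norm_num) (by norm_num)
  have e₄ := h 4 (by norm_num) (by norm_num)
  have e₅ := h 5 (by norm_num) (by norm_num)
  simp only [Nat.reduceAdd, sum_range_succ, range_one, sum_singleton, Nat.choose, Nat.cast_one,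
    one_mul, tsub_zero, add_zero, tsub_self, Nat.cast_ofNat, Nat.add_one_sub_one, Nat.reduceSub]
    at e₁ e₂ e₃ e₄ e₅
  set v := q 0
  have hq₁ : q 1 = -p 1 * v ^ 2 := by linear_combination v * e₁ - q 1 * h₀
  have hq₂ : q 2 = -p 2 * v ^ 2 + 2 * p 1 ^ 2 * v ^ 3 := by
    linear_combination v * e₂ - q 2 * h₀ - 2 * p 1 * v * hq₁
  have hq₃ : q 3 = -p 3 * v ^ 2 + 6 * p 1 * p 2 * v ^ 3 - 6 * p 1 ^ 3 * v ^ 4 := by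
    linear_combination v * e₃ - q 3 * h₀ - 3 * p 1 * v * hq₂ - 3 * p 2 * v * hq₁
  have hq₄ : q 4 = -p 4 * v ^ 2 + (8 * p 1 * p 3 + 6 * p 2 ^ 2) * v ^ 3
      - 36 * p 1 ^ 2 * p 2 * v ^ 4 + 24 * p 1 ^ 4 * v ^ 5 := by
    linear_combination v * e₄ - q 4 * h₀ - 4 * p 1 * v * hq₃ - 6 * p 2 * v * hq₂
      - 4 * p 3 * v * hq₁
  have hq₅ : q 5 = -p 5 * v ^ 2 + (10 * p 1 * p 4 + 20 * p 2 * p 3) * v ^ 3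
      - (60 * p 1 ^ 2 * p 3 + 90 * p 1 * p 2 ^ 2) * v ^ 4 + 240 * p 1 ^ 3 * p 2 * v ^ 5
      - 120 * p 1 ^ 5 * v ^ 6 := by
    linear_combination v * e₅ - q 5 * h₀ - 5 * p 1 * v * hq₄ - 10 * p 2 * v * hq₃
      - 10 * p 3 * v * hq₂ - 5 * p 4 * v * hq₁
  unfold jetJ
  rw [hq₁, hq₂, hq₃, hq₄, hq₅]
  exact div_sq_eq_of_scaling (μ := v ^ 4) (pow_ne_zero 4 (right_ne_zero_of_mul_eq_one h₀))
    (by ring) (by ring)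

section IteratedDeriv

variable {𝕜 : Type*} [NontriviallyNormedField 𝕜]

theorem iteratedDeriv_comp_mul_left {F : Type*} [NormedAddCommGroup F] [NormedSpace 𝕜 F]
    (n : ℕ) (f : 𝕜 → F) (B : 𝕜) :
    iteratedDeriv n (fun t => f (B * t)) = fun t => B ^ n • iteratedDeriv n f (B * t) := by
  induction n with
  | zero => simp only [iteratedDeriv_zero, pow_zero, one_smul]
  | succ n ih =>
    ext t
    simp only [iteratedDeriv_succ, ih, deriv_fun_const_smul_field, deriv_comp_mul_left, smul_smul,
      pow_succ]

theorem iteratedDeriv_comp_affine (n : ℕ) (f : 𝕜 → 𝕜) (A B t : 𝕜) :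
    iteratedDeriv n (fun t => f (A + B * t)) t = B ^ n * iteratedDeriv n f (A + B * t) := by
  rw [iteratedDeriv_comp_mul_left n (fun u => f (A + u)), iteratedDeriv_comp_const_add]
  rfl

theorem iteratedDeriv_const_mul_add {n : ℕ} (hn : 0 < n) (f : 𝕜 → 𝕜) (s b t : 𝕜) :
    iteratedDeriv n (fun t => s * f t + b) t = s * iteratedDeriv n f t := by
  simp_rw [add_comm _ b]
  rw [iteratedDeriv_const_add hn, iteratedDeriv_const_mul_field]

end IteratedDeriv

theorem Filter.EventuallyEq.invJ_eq {f g : ℝ → ℝ} {x : ℝ} (h : f =ᶠ[𝓝 x] g) :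
    invJ f x = invJ g x := by
  simp only [invJ_eq_jetJ, h.iteratedDeriv_eq]

theorem invJ_comp_affine {B : ℝ} (hB : B ≠ 0) (f : ℝ → ℝ) (A t : ℝ) :
    invJ (fun t => f (A + B * t)) t = invJ f (A + B * t) := by
  rw [invJ_eq_jetJ, invJ_eq_jetJ]
  exact jetJ_eq_of_rescale one_ne_zero hB fun n _ => by rw [iteratedDeriv_comp_affine, one_mul]

theorem invJ_const_mul_add {s : ℝ} (hs : s ≠ 0) (f : ℝ → ℝ) (b t : ℝ) :
    invJ (fun t => s * f t + b) t = invJ f t := by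
  rw [invJ_eq_jetJ, invJ_eq_jetJ]
  exact jetJ_eq_of_rescale hs one_ne_zero fun n hn => by
    rw [iteratedDeriv_const_mul_add hn, one_pow, mul_one]

theorem invJ_inv {f : ℝ → ℝ} {x : ℝ} (hf : ContDiffAt ℝ 5 f x) (hx : f x ≠ 0) :
    invJ (fun t => (f t)⁻¹) x = invJ f x := by
  have hf_inv : ContDiffAt ℝ 5 (fun t => (f t)⁻¹) x := hf.inv hx
  have h_one : f * (fun t => (f t)⁻¹) =ᶠ[𝓝 x] fun _ => 1 :=
    (hf.continuousAt.eventually_ne hx).mono fun t ht => mul_inv_cancel₀ ht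
  rw [invJ_eq_jetJ, invJ_eq_jetJ]
  refine jetJ_eq_of_mul_eq_one (mul_inv_cancel₀ hx) fun n hn hn5 => ?_
  have hn5' : (n : WithTop ℕ∞) ≤ 5 := by exact_mod_cast hn5
  rw [← iteratedDeriv_mul (hf.of_le hn5') (hf_inv.of_le hn5'), h_one.iteratedDeriv_eq,
    iteratedDeriv_const, if_neg hn.ne']

theorem invJ_mobius {a b c d : ℝ} (hdet : a * d - b * c ≠ 0) {f : ℝ → ℝ} {x : ℝ}
    (hf : ContDiffAt ℝ 5 f x) (hx : c * f x + d ≠ 0) :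
    invJ (fun t => (a * f t + b) / (c * f t + d)) x = invJ f x := by
  rcases eq_or_ne c 0 with rfl | hc
  · have hd : d ≠ 0 := by simpa using hx
    have h_affine : (fun t => (a * f t + b) / (0 * f t + d)) = fun t => a / d * f t + b / d := by
      ext t; rw [zero_mul, zero_add, add_div, mul_div_right_comm]
    rw [h_affine, invJ_const_mul_add (div_ne_zero (left_ne_zero_of_mul (by simpa using hdet)) hd)]
  · have h_near : (fun t => (a * f t + b) / (c * f t + d)) =ᶠ[𝓝 x]
        fun t => -(a * d - b * c) / c * (c * f t + d)⁻¹ + a / c := by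
      have h_cont : ContinuousAt (fun t => c * f t + d) x := by fun_prop
      filter_upwards [h_cont.eventually_ne hx] with t ht
      rw [div_eq_iff ht, add_mul, mul_assoc, inv_mul_cancel₀ ht]
      field_simp
      ring
    rw [h_near.invJ_eq, invJ_const_mul_add (div_ne_zero (neg_ne_zero.2 hdet) hc),
      invJ_inv (f := fun t => c * f t + d) (by fun_prop) hx, invJ_const_mul_add hc]

theorem stmt_7_general (A B a b c d : ℝ) (hB : B ≠ 0) (hdet : a * d - b * c = 1)
    (t₀ t₁ : ℝ) (ht₁ : t₁ = A + B * t₀)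
    (ψ : ℝ → ℝ) (U : Set ℝ) (hU : IsOpen U) (ht₁U : t₁ ∈ U)
    (hψ : ContDiffOn ℝ 5 ψ U) (hcd : ∀ x ∈ U, c * ψ x + d ≠ 0)
    (ψ₂ : ℝ → ℝ)
    (hψ₂ : ∀ t, ψ₂ t = (B / |B|) * ((a * ψ (A + B * t) + b) / (c * ψ (A + B * t) + d))) :
    invJ ψ₂ t₀ = invJ ψ t₁ := by
  set s := B / |B|
  have hs : s ≠ 0 := div_ne_zero hB (abs_ne_zero.2 hB)
  have hdet_s : s * a * d - s * b * c = s := by linear_combination s * hdet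
  set M : ℝ → ℝ := fun u => (s * a * ψ u + s * b) / (c * ψ u + d) with hM
  have hψ₂_comp : ψ₂ = fun t => M (A + B * t) := by
    funext t
    rw [hψ₂, hM]
    ring
  rw [hψ₂_comp, invJ_comp_affine hB, ← ht₁]
  exact invJ_mobius (by rwa [hdet_s]) (hψ.contDiffAt (hU.mem_nhds ht₁U)) (hcd t₁ ht₁U)

/-- Invariance of `J` under the action `ψ₂(t) = sgn(B)·(aψ(A+Bt)+b)/(cψ(A+Bt)+d)`
of `SAff₁(ℝ) × PSL₂(ℝ) × ℤ₂`. -/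
theorem stmt_7 (A B a b c d : ℝ) (hB : B ≠ 0) (hdet : a * d - b * c = 1)
    (t₀ t₁ : ℝ) (ht₁ : t₁ = A + B * t₀)
    (ψ : ℝ → ℝ) (U : Set ℝ) (hU : IsOpen U) (ht₁U : t₁ ∈ U)
    (hψ : ContDiffOn ℝ 5 ψ U) (hcd : ∀ x ∈ U, c * ψ x + d ≠ 0)
    (hnd : 2 * deriv ψ t₁ * iteratedDeriv 3 ψ t₁ - 3 * (iteratedDeriv 2 ψ t₁) ^ 2 ≠ 0)
    (ψ₂ : ℝ → ℝ)
    (hψ₂ : ∀ t, ψ₂ t = (B / |B|) * ((a * ψ (A + B * t) + b) / (c * ψ (A + B * t) + d))) :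
    invJ ψ₂ t₀ = invJ ψ t₁ :=
  stmt_7_general A B a b c d hB hdet t₀ t₁ ht₁ ψ U hU ht₁U hψ hcd ψ₂ hψ₂
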